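/- arXiv:2002.02107 — 5 statements merged into one kernel-verified Lean document; each statement's English description precedes it below -/
import Mathlib

section
/- Let μ < r, r > 0, Q > 0, F > 0, with β₁ > 1 and β₂ < 0 the roots of (1/2)σ²β(β-1) + μβ - r = 0. Then L₁ = (Q F^{1-β₁}/(β₁-β₂))·(β₂/r - (β₂-1)/(r-μ)) > 0 and M₂ = (Q F^{1-β₂}/(β₁-β₂))·(β₁/r - (β₁-1)/(r-μ)) > 0. -/
open Real

theorem L1_M2_pos
    (r σ μ β₁ β₂ F Q : ℝ)
    (hr : 0 < r) (hσ : 0 < σ) (hμr : μ < r) (hF : 0 < F) (hQ : 0 < Q)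
    (hβ₁ : 1 < β₁) (hβ₁root : (1/2)*σ^2*β₁*(β₁-1) + μ*β₁ - r = 0)
    (hβ₂ : β₂ < 0) (hβ₂root : (1/2)*σ^2*β₂*(β₂-1) + μ*β₂ - r = 0)
    (L₁ M₂ : ℝ)
    (hL₁ : L₁ = Q * F ^ (1-β₁) / (β₁ - β₂) * (β₂/r - (β₂ - 1)/(r - μ)))
    (hM₂ : M₂ = Q * F ^ (1-β₂) / (β₁ - β₂) * (β₁/r - (β₁ - 1)/(r - μ))) :
    0 < L₁ ∧ 0 < M₂ := by
  have hrμ : 0 < r - μ := sub_pos.mpr hμr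
  have hβ : 0 < β₁ - β₂ := sub_pos.mpr (hβ₂.trans (lt_trans one_pos hβ₁))
  have hσ2 : 0 < σ^2 := by positivity
  have p1 : 0 < σ^2 * (β₁ * (β₁ - 1)) :=
    mul_pos hσ2 (mul_pos (lt_trans one_pos hβ₁) (sub_pos.mpr hβ₁))
  have p2 : 0 < σ^2 * (β₂ * (β₂ - 1)) :=
    mul_pos hσ2 (mul_pos_of_neg_of_neg hβ₂ (by linarith))
  have h1 : 0 < r - β₁ * μ := by nlinarith
  have h2 : 0 < r - β₂ * μ := by nlinarith
  have e1 : β₁/r - (β₁ - 1)/(r - μ) = (r - β₁*μ)/(r*(r-μ)) := by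
    field_simp; ring
  have e2 : β₂/r - (β₂ - 1)/(r - μ) = (r - β₂*μ)/(r*(r-μ)) := by
    field_simp; ring
  have hF1 : (0:ℝ) < F ^ (1-β₁) := rpow_pos_of_pos hF _
  have hF2 : (0:ℝ) < F ^ (1-β₂) := rpow_pos_of_pos hF _
  constructor
  · rw [hL₁, e2]; positivity
  · rw [hM₂, e1]; positivity
end

section
/- Let μ < r, r > 0, Q > 0, 0 < F ≤ C, with β₁ > 1 and β₂ < 0 the roots of (1/2)σ²β(β-1) + μβ - r = 0. Then the collar coefficients satisfy G₁ = -(C^{1-β₁}Q/(β₁-β₂))·(β₂/r - (β₂-1)/(r-μ)) < 0 and H₂ = ((F^{1-β₂} - C^{1-β₂})Q/(β₁-β₂))·(β₁/r - (β₁-1)/(r-μ)) ≤ 0, with H₂ = 0 iff C = F. -/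
open Real

theorem G1_neg_H2_nonpos
    (r σ μ β₁ β₂ F C Q : ℝ)
    (hr : 0 < r) (hσ : 0 < σ) (hμr : μ < r)
    (hF : 0 < F) (hFC : F ≤ C) (hQ : 0 < Q)
    (hβ₁ : 1 < β₁) (hβ₁root : (1/2)*σ^2*β₁*(β₁-1) + μ*β₁ - r = 0)
    (hβ₂ : β₂ < 0) (hβ₂root : (1/2)*σ^2*β₂*(β₂-1) + μ*β₂ - r = 0)
    (G₁ H₂ : ℝ)
    (hG₁ : G₁ = -(C ^ (1-β₁) * Q / (β₁ - β₂)) * (β₂/r - (β₂ - 1)/(r - μ)))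
    (hH₂ : H₂ = (F ^ (1-β₂) - C ^ (1-β₂)) * Q / (β₁ - β₂) *
      (β₁/r - (β₁ - 1)/(r - μ))) :
    G₁ < 0 ∧ H₂ ≤ 0 ∧ (H₂ = 0 ↔ C = F) := by
  have hrμ : 0 < r - μ := by linarith
  have hC : 0 < C := lt_of_lt_of_le hF hFC
  have hd : 0 < β₁ - β₂ := by linarith
  have hσ2 : 0 < σ ^ 2 := by positivity
  -- bracket for β₂
  have h2m : 0 < r - μ * β₂ := by
    have h1 : 0 < β₂ * (β₂ - 1) := mul_pos_of_neg_of_neg hβ₂ (by linarith)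
    nlinarith [hβ₂root]
  have hA : 0 < β₂/r - (β₂ - 1)/(r - μ) := by
    have : β₂/r - (β₂ - 1)/(r - μ) = (r - μ * β₂) / (r * (r - μ)) := by
      field_simp; ring
    rw [this]; exact div_pos h2m (mul_pos hr hrμ)
  -- bracket for β₁
  have h1m : 0 < r - μ * β₁ := by
    have h1 : 0 < β₁ * (β₁ - 1) := mul_pos (by linarith) (by linarith)
    nlinarith [hβ₁root]
  have hB : 0 < β₁/r - (β₁ - 1)/(r - μ) := by
    have : β₁/r - (β₁ - 1)/(r - μ) = (r - μ * β₁) / (r * (r - μ)) := by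
      field_simp; ring
    rw [this]; exact div_pos h1m (mul_pos hr hrμ)
  have hCp : 0 < C ^ (1 - β₁) := Real.rpow_pos_of_pos hC _
  have hG : G₁ < 0 := by
    rw [hG₁]
    have hx : 0 < C ^ (1 - β₁) * Q / (β₁ - β₂) :=
      div_pos (mul_pos hCp hQ) hd
    nlinarith [mul_pos hx hA]
  have hkey : H₂ = (F ^ (1 - β₂) - C ^ (1 - β₂)) *
      (Q / (β₁ - β₂) * (β₁/r - (β₁ - 1)/(r - μ))) := by
    rw [hH₂]; ring
  have hfac : 0 < Q / (β₁ - β₂) * (β₁/r - (β₁ - 1)/(r - μ)) :=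
    mul_pos (div_pos hQ hd) hB
  have hexp : (0:ℝ) < 1 - β₂ := by linarith
  have hle : F ^ (1 - β₂) ≤ C ^ (1 - β₂) :=
    Real.rpow_le_rpow hF.le hFC hexp.le
  refine ⟨hG, ?_, ?_⟩
  · rw [hkey]
    exact mul_nonpos_of_nonpos_of_nonneg (by linarith) hfac.le
  · constructor
    · intro h0
      by_contra hne
      have hlt : F < C := lt_of_le_of_ne hFC (fun h => hne h.symm)
      have : F ^ (1 - β₂) < C ^ (1 - β₂) :=
        Real.rpow_lt_rpow hF.le hlt hexp
      rw [hkey] at h0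
      rcases mul_eq_zero.mp h0 with h | h
      · linarith
      · linarith
    · intro h
      rw [hkey, h]
      ring
end

section
/- For all P > 0, the value of a perpetual minimum-price-guarantee contract dominates the value of a perpetual collar contract with the same floor: V_MP(P) ≥ V_CP(P), where V_MP(P) = L₁P^{β₁} + FQ/r for P < F and M₂P^{β₂} + PQ/(r-μ) for P ≥ F; and V_CP(P) = E₁P^{β₁} + FQ/r for P < F, G₁P^{β₁} + G₂P^{β₂} + PQ/(r-μ) for F ≤ P < C, and H₂P^{β₂} + CQ/r for P ≥ C. -/
/-!
Write `k β = β/r - (β-1)/(r-μ)`; for a root `β` of the characteristic quadratic,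
`r - μβ = σ²β(β-1)/2 ≥ 0`, so `k β₁, k β₂ ≥ 0`. Below the cap `V_MP - V_CP` is a nonnegative
multiple of `P^β₁`. Above the cap it is `a P^β₂ + PQ/(r-μ) - CQ/r` with `a ≥ 0`; replacing
`P^β₂` by its tangent line at `C` (convexity for `β₂ < 0`) leaves `CQ k(β₂)(1 + β₁(P/C-1))/(β₁-β₂)`,
which is nonnegative for `P ≥ C`.
-/

open Real

lemma one_add_mul_sub_one_le_rpow_of_nonpos {x β : ℝ} (hx : 0 < x) (hβ : β ≤ 0) :
    1 + β * (x - 1) ≤ x ^ β := by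
  have hlog : β * (x - 1) ≤ β * log x :=
    mul_le_mul_of_nonpos_left (log_le_sub_one_of_pos hx) hβ
  rw [rpow_def_of_pos hx, mul_comm (log x)]
  linarith [add_one_le_exp (β * log x)]

lemma rpow_tangent_le_of_nonpos {C P β : ℝ} (hC : 0 < C) (hP : 0 < P) (hβ : β ≤ 0) :
    C ^ β * (1 + β * (P / C - 1)) ≤ P ^ β := by
  have h := one_add_mul_sub_one_le_rpow_of_nonpos (div_pos hP hC) hβ
  rw [div_rpow hP.le hC.le] at h
  have hCβ : 0 < C ^ β := rpow_pos_of_pos hC β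
  rwa [le_div_iff₀ hCβ, mul_comm] at h

lemma div_sub_div_sub_nonneg_of_root {r μ σ β : ℝ} (hr : 0 < r) (hμr : μ < r)
    (hroot : (1/2)*σ^2*β*(β-1) + μ*β - r = 0) (hβ : 0 ≤ β * (β - 1)) :
    0 ≤ β/r - (β - 1)/(r - μ) := by
  have hrμ : 0 < r - μ := sub_pos.2 hμr
  have hnum : 0 ≤ r - μ * β := by nlinarith [sq_nonneg σ]
  have hform : β/r - (β - 1)/(r - μ) = (r - μ * β) / (r * (r - μ)) := by
    field_simp
    ring
  rw [hform]
  positivity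

lemma mul_div_le_mul_rpow_add_mul_div {r μ β₁ β₂ C Q P : ℝ} (hr : 0 < r) (hμr : μ < r)
    (hβ₁ : 0 ≤ β₁) (hβ₂ : β₂ < 0) (hC : 0 < C) (hQ : 0 ≤ Q) (hCP : C ≤ P)
    (hk₁ : 0 ≤ β₁/r - (β₁ - 1)/(r - μ)) (hk₂ : 0 ≤ β₂/r - (β₂ - 1)/(r - μ)) :
    C*Q/r ≤ C ^ (1-β₂) * Q / (β₁ - β₂) * (β₁/r - (β₁ - 1)/(r - μ)) * P ^ β₂ + P*Q/(r-μ) := by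
  have hrμ : r - μ ≠ 0 := (sub_pos.2 hμr).ne'
  have hβ : 0 < β₁ - β₂ := by linarith
  have hx : 0 ≤ 1 + β₁ * (P / C - 1) := by
    have : 0 ≤ P / C - 1 := by rw [sub_nonneg, one_le_div hC]; exact hCP
    nlinarith
  have hCC : C ^ (1-β₂) * C ^ β₂ = C := by rw [← rpow_add hC]; norm_num
  calc C*Q/r
      ≤ C*Q/r + C * Q * (β₂/r - (β₂ - 1)/(r - μ)) * (1 + β₁ * (P / C - 1)) / (β₁ - β₂) :=
        le_add_of_nonneg_right (by positivity)
    _ = C * Q / (β₁ - β₂) * (β₁/r - (β₁ - 1)/(r - μ)) * (1 + β₂ * (P / C - 1))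
          + P*Q/(r-μ) := by
        field_simp
        ring
    _ = C ^ (1-β₂) * Q / (β₁ - β₂) * (β₁/r - (β₁ - 1)/(r - μ))
          * (C ^ β₂ * (1 + β₂ * (P / C - 1))) + P*Q/(r-μ) := by
        linear_combination
          -(Q / (β₁ - β₂) * (β₁/r - (β₁ - 1)/(r - μ)) * (1 + β₂ * (P / C - 1))) * hCC
    _ ≤ C ^ (1-β₂) * Q / (β₁ - β₂) * (β₁/r - (β₁ - 1)/(r - μ)) * P ^ β₂ + P*Q/(r-μ) := by
        gcongr
        exact rpow_tangent_le_of_nonpos hC (hC.trans_le hCP) hβ₂.le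

theorem VMP_ge_VCP_general
    (r σ μ β₁ β₂ F C Q : ℝ)
    (hr : 0 < r) (hμr : μ < r)
    (hF : 0 < F) (hFC : F ≤ C) (hQ : 0 < Q)
    (hβ₁ : 1 < β₁) (hβ₁root : (1/2)*σ^2*β₁*(β₁-1) + μ*β₁ - r = 0)
    (hβ₂ : β₂ < 0) (hβ₂root : (1/2)*σ^2*β₂*(β₂-1) + μ*β₂ - r = 0)
    (L₁ M₂ E₁ G₁ G₂ H₂ : ℝ)
    (hL₁ : L₁ = Q * F ^ (1-β₁) / (β₁ - β₂) * (β₂/r - (β₂ - 1)/(r - μ)))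
    (hM₂ : M₂ = Q * F ^ (1-β₂) / (β₁ - β₂) * (β₁/r - (β₁ - 1)/(r - μ)))
    (hE₁ : E₁ = (F ^ (1-β₁) - C ^ (1-β₁)) * Q / (β₁ - β₂) *
      (β₂/r - (β₂ - 1)/(r - μ)))
    (hG₁ : G₁ = -(C ^ (1-β₁) * Q / (β₁ - β₂)) * (β₂/r - (β₂ - 1)/(r - μ)))
    (hG₂ : G₂ = M₂)
    (hH₂ : H₂ = (F ^ (1-β₂) - C ^ (1-β₂)) * Q / (β₁ - β₂) *
      (β₁/r - (β₁ - 1)/(r - μ)))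
    (V_MP V_CP : ℝ → ℝ)
    (hVMP : ∀ P : ℝ, V_MP P =
      if P < F then L₁ * P ^ β₁ + F*Q/r else M₂ * P ^ β₂ + P*Q/(r-μ))
    (hVCP : ∀ P : ℝ, V_CP P =
      if P < F then E₁ * P ^ β₁ + F*Q/r
      else if P < C then G₁ * P ^ β₁ + G₂ * P ^ β₂ + P*Q/(r-μ)
      else H₂ * P ^ β₂ + C*Q/r) :
    ∀ P : ℝ, 0 < P → V_CP P ≤ V_MP P := by
  have hC : 0 < C := hF.trans_le hFC
  have hβ : 0 < β₁ - β₂ := by linarith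
  have hk₁ := div_sub_div_sub_nonneg_of_root hr hμr hβ₁root (by nlinarith)
  have hk₂ := div_sub_div_sub_nonneg_of_root hr hμr hβ₂root (by nlinarith)
  have hG₁_nonpos : G₁ ≤ 0 := by
    rw [hG₁, neg_mul, neg_nonpos]
    positivity
  intro P hP
  rw [hVMP, hVCP]
  split_ifs with hPF hPC
  · have hEL : E₁ ≤ L₁ := by
      have : E₁ = L₁ + G₁ := by rw [hE₁, hL₁, hG₁]; ring
      linarith
    rw [add_le_add_iff_right]
    exact mul_le_mul_of_nonneg_right hEL (rpow_pos_of_pos hP β₁).le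
  · rw [hG₂, add_le_add_iff_right, add_le_iff_nonpos_left]
    exact mul_nonpos_of_nonpos_of_nonneg hG₁_nonpos (rpow_pos_of_pos hP β₁).le
  · have hMH : M₂ - H₂ = C ^ (1-β₂) * Q / (β₁ - β₂) * (β₁/r - (β₁ - 1)/(r - μ)) := by
      rw [hM₂, hH₂]; ring
    have := mul_div_le_mul_rpow_add_mul_div hr hμr (by linarith) hβ₂ hC hQ.le (not_lt.1 hPC) hk₁ hk₂
    rw [← hMH] at this
    linarith

theorem VMP_ge_VCP
    (r σ μ β₁ β₂ F C Q : ℝ)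
    (hr : 0 < r) (hσ : 0 < σ) (hμr : μ < r)
    (hF : 0 < F) (hFC : F ≤ C) (hQ : 0 < Q)
    (hβ₁ : 1 < β₁) (hβ₁root : (1/2)*σ^2*β₁*(β₁-1) + μ*β₁ - r = 0)
    (hβ₂ : β₂ < 0) (hβ₂root : (1/2)*σ^2*β₂*(β₂-1) + μ*β₂ - r = 0)
    (L₁ M₂ E₁ G₁ G₂ H₂ : ℝ)
    (hL₁ : L₁ = Q * F ^ (1-β₁) / (β₁ - β₂) * (β₂/r - (β₂ - 1)/(r - μ)))
    (hM₂ : M₂ = Q * F ^ (1-β₂) / (β₁ - β₂) * (β₁/r - (β₁ - 1)/(r - μ)))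
    (hE₁ : E₁ = (F ^ (1-β₁) - C ^ (1-β₁)) * Q / (β₁ - β₂) *
      (β₂/r - (β₂ - 1)/(r - μ)))
    (hG₁ : G₁ = -(C ^ (1-β₁) * Q / (β₁ - β₂)) * (β₂/r - (β₂ - 1)/(r - μ)))
    (hG₂ : G₂ = M₂)
    (hH₂ : H₂ = (F ^ (1-β₂) - C ^ (1-β₂)) * Q / (β₁ - β₂) *
      (β₁/r - (β₁ - 1)/(r - μ)))
    (V_MP V_CP : ℝ → ℝ)
    (hVMP : ∀ P : ℝ, V_MP P =
      if P < F then L₁ * P ^ β₁ + F*Q/r else M₂ * P ^ β₂ + P*Q/(r-μ))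
    (hVCP : ∀ P : ℝ, V_CP P =
      if P < F then E₁ * P ^ β₁ + F*Q/r
      else if P < C then G₁ * P ^ β₁ + G₂ * P ^ β₂ + P*Q/(r-μ)
      else H₂ * P ^ β₂ + C*Q/r) :
    ∀ P : ℝ, 0 < P → V_CP P ≤ V_MP P :=
  VMP_ge_VCP_general r σ μ β₁ β₂ F C Q hr hμr hF hFC hQ hβ₁ hβ₁root hβ₂ hβ₂root L₁ M₂ E₁ G₁ G₂ H₂
    hL₁ hM₂ hE₁ hG₁ hG₂ hH₂ V_MP V_CP hVMP hVCP
end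

section
/- Fixed-premium FIT threshold: P_P* = (β₁/(β₁-1))·((r-μ)/Q)·(I - (FQ/r)(1 - e^{-rT})) solves the value-matching and smooth-pasting conditions for the payoff V_P(P) = PQ/(r-μ) + (FQ/r)(1 - e^{-rT}), and P_P* is strictly decreasing in F and in T (for I > (FQ/r)(1 - e^{-rT})). -/
open Real

theorem fixed_premium_threshold
    (r σ μ β₁ F Q I : ℝ)
    (hr : 0 < r) (hσ : 0 < σ) (hμr : μ < r) (hQ : 0 < Q) (hF : 0 < F) (hI : 0 < I)
    (hβ₁ : 1 < β₁) (hβ₁root : (1/2)*σ^2*β₁*(β₁-1) + μ*β₁ - r = 0)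
    (V_P : ℝ → ℝ → ℝ)
    (hVP : ∀ T P : ℝ, V_P T P = P*Q/(r-μ) + F*Q/r * (1 - Real.exp (-r*T)))
    (PP : ℝ → ℝ)
    (hPP : ∀ T : ℝ, PP T = β₁/(β₁-1) * ((r-μ)/Q) *
      (I - F*Q/r * (1 - Real.exp (-r*T)))) :
    (∀ T : ℝ, 0 < T → F*Q/r * (1 - Real.exp (-r*T)) < I →
      ∃ V₁ : ℝ, V₁ * (PP T) ^ β₁ = V_P T (PP T) - I ∧
        β₁ * V₁ * (PP T) ^ (β₁-1) = Q/(r-μ)) ∧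
    (∀ T : ℝ, 0 < T →
      ∀ F₁ F₂ : ℝ, F₁ < F₂ →
        β₁/(β₁-1) * ((r-μ)/Q) * (I - F₂*Q/r * (1 - Real.exp (-r*T))) <
        β₁/(β₁-1) * ((r-μ)/Q) * (I - F₁*Q/r * (1 - Real.exp (-r*T)))) ∧
    (∀ T₁ T₂ : ℝ, 0 < T₁ → T₁ < T₂ → PP T₂ < PP T₁) := by
  have hrμ : 0 < r - μ := by linarith
  have hβ : 0 < β₁ - 1 := by linarith
  have hβ0 : 0 < β₁ := by linarith
  have hC : 0 < β₁/(β₁-1) * ((r-μ)/Q) := by positivity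
  refine ⟨?_, ?_, ?_⟩
  · intro T hT hIK
    set K := F*Q/r * (1 - Real.exp (-r*T)) with hK
    clear_value K
    have hP : PP T = β₁/(β₁-1) * ((r-μ)/Q) * (I - K) := by rw [hPP T, hK]
    have hPpos : 0 < PP T := by
      rw [hP]; exact mul_pos hC (by linarith)
    refine ⟨Q/((r-μ)*β₁) * (PP T) ^ (1-β₁), ?_, ?_⟩
    · have h1 : (PP T) ^ (1-β₁) * (PP T) ^ β₁ = PP T := by
        rw [← Real.rpow_add hPpos]
        simp
      have h2 : Q/((r-μ)*β₁) * (PP T) ^ (1-β₁) * (PP T) ^ β₁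
          = Q/((r-μ)*β₁) * PP T := by rw [mul_assoc, h1]
      rw [h2, hVP, ← hK, hP]
      field_simp
      ring
    · have h1 : (PP T) ^ (1-β₁) * (PP T) ^ (β₁-1) = 1 := by
        rw [← Real.rpow_add hPpos]
        simp
      calc β₁ * (Q/((r-μ)*β₁) * (PP T) ^ (1-β₁)) * (PP T) ^ (β₁-1)
          = β₁ * (Q/((r-μ)*β₁)) * ((PP T) ^ (1-β₁) * (PP T) ^ (β₁-1)) := by ring
        _ = Q/(r-μ) := by rw [h1]; field_simp
  · intro T hT F₁ F₂ hF12
    have he : Real.exp (-r*T) < 1 := Real.exp_lt_one_iff.mpr (by nlinarith)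
    have hE : 0 < 1 - Real.exp (-r*T) := by linarith
    have : F₁*Q/r * (1 - Real.exp (-r*T)) < F₂*Q/r * (1 - Real.exp (-r*T)) := by
      gcongr
    exact mul_lt_mul_of_pos_left (by linarith) hC
  · intro T₁ T₂ hT₁ hT12
    have he : Real.exp (-r*T₂) < Real.exp (-r*T₁) :=
      Real.exp_lt_exp.mpr (by nlinarith)
    have hE : 0 < 1 - Real.exp (-r*T₁) := by
      have : Real.exp (-r*T₁) < 1 := Real.exp_lt_one_iff.mpr (by nlinarith)
      linarith
    have hFQ : 0 < F*Q/r := by positivity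
    have : F*Q/r * (1 - Real.exp (-r*T₁)) < F*Q/r * (1 - Real.exp (-r*T₂)) :=
      mul_lt_mul_of_pos_left (by linarith) hFQ
    rw [hPP, hPP]
    exact mul_lt_mul_of_pos_left (by linarith) hC
end

section
/- Comparison of fixed-price and fixed-premium thresholds: with the same tariff F, duration T, quantity Q and cost I (and I > (FQ/r)(1-e^{-rT})), the fixed-premium threshold satisfies P_P* = e^{-(r-μ)T}·P_F* < P_F*, i.e., the fixed premium always accelerates investment relative to the fixed price. -/
open Real

theorem premium_below_fixed_price
    (r σ μ β₁ F Q T I : ℝ)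
    (hr : 0 < r) (hσ : 0 < σ) (hμr : μ < r) (hQ : 0 < Q) (hT : 0 < T)
    (hβ₁ : 1 < β₁) (hβ₁root : (1/2)*σ^2*β₁*(β₁-1) + μ*β₁ - r = 0)
    (hI : F*Q/r * (1 - Real.exp (-r*T)) < I)
    (PF PP : ℝ)
    (hPF : PF = β₁/(β₁-1) * ((r-μ)/(Q * Real.exp (-(r-μ)*T))) *
      (I - F*Q/r * (1 - Real.exp (-r*T))))
    (hPP : PP = β₁/(β₁-1) * ((r-μ)/Q) *
      (I - F*Q/r * (1 - Real.exp (-r*T)))) :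
    PP = Real.exp (-(r-μ)*T) * PF ∧ PP < PF := by
  have hE : (0:ℝ) < Real.exp (-(r-μ)*T) := Real.exp_pos _
  have hE1 : Real.exp (-(r-μ)*T) < 1 := by
    rw [Real.exp_lt_one_iff]
    nlinarith
  have heq : PP = Real.exp (-(r-μ)*T) * PF := by
    set E := Real.exp (-(r-μ)*T) with hEdef
    have hEne : E ≠ 0 := ne_of_gt hE
    have hb : β₁ - 1 ≠ 0 := by linarith
    have hrne : r ≠ 0 := hr.ne'
    have hQne : Q ≠ 0 := hQ.ne'
    rw [hPF, hPP]
    field_simp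
  have hPFpos : 0 < PF := by
    rw [hPF]
    have h1 : 0 < β₁/(β₁-1) := div_pos (by linarith) (by linarith)
    have h2 : 0 < (r-μ)/(Q * Real.exp (-(r-μ)*T)) := by
      apply div_pos (by linarith) (by positivity)
    have h3 : 0 < I - F*Q/r * (1 - Real.exp (-r*T)) := by linarith
    positivity
  exact ⟨heq, by nlinarith⟩
end
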